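/- arXiv:1807.03521 — 2 statements merged into one kernel-verified Lean document; each statement's English description precedes it below -/
import Mathlib

section
/- Let v, v̂, and d be random variables (discrete, finite). If the mutual information I(v; v̂) exceeds the conditional entropy H(v | d), then the mutual information I(v̂; d) is strictly positive. -/
open Finset

variable {Ω : Type*} [Fintype Ω]

/-- Probability that random variable `X` takes value `s`, under mass function `μ`. -/
noncomputable def probOf (μ : Ω → ℝ) {S : Type*} [DecidableEq S] (X : Ω → S) (s : S) : ℝ :=
  ∑ ω ∈ Finset.univ.filter fun ω => X ω = s, μ ω

/-- `μ` is a probability mass function on the finite sample space `Ω`. -/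
def IsProbMass (μ : Ω → ℝ) : Prop := (∀ ω, 0 ≤ μ ω) ∧ ∑ ω, μ ω = 1

/-- Shannon entropy of a finitely supported random variable. -/
noncomputable def entropy (μ : Ω → ℝ) {S : Type*} [Fintype S] [DecidableEq S]
    (X : Ω → S) : ℝ :=
  ∑ s : S, Real.negMulLog (probOf μ X s)

/-- Conditional Shannon entropy `H(X | Y) = H(X, Y) - H(Y)`. -/
noncomputable def condEntropy (μ : Ω → ℝ) {S T : Type*} [Fintype S] [DecidableEq S]
    [Fintype T] [DecidableEq T] (X : Ω → S) (Y : Ω → T) : ℝ :=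
  entropy μ (fun ω => (X ω, Y ω)) - entropy μ Y

/-- Mutual information `I(X; Y) = H(X) + H(Y) - H(X, Y)`. -/
noncomputable def mutualInfo (μ : Ω → ℝ) {S T : Type*} [Fintype S] [DecidableEq S]
    [Fintype T] [DecidableEq T] (X : Ω → S) (Y : Ω → T) : ℝ :=
  entropy μ X + entropy μ Y - entropy μ (fun ω => (X ω, Y ω))

/-- Conditional mutual information `I(X; Y | Z) = H(X,Z) + H(Y,Z) - H(X,Y,Z) - H(Z)`. -/
noncomputable def condMutualInfo (μ : Ω → ℝ) {S T U : Type*} [Fintype S] [DecidableEq S]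
    [Fintype T] [DecidableEq T] [Fintype U] [DecidableEq U]
    (X : Ω → S) (Y : Ω → T) (Z : Ω → U) : ℝ :=
  entropy μ (fun ω => (X ω, Z ω)) + entropy μ (fun ω => (Y ω, Z ω))
    - entropy μ (fun ω => (X ω, Y ω, Z ω)) - entropy μ Z

/-- Independence of two random variables: the joint distribution factorizes. -/
def IndepRV (μ : Ω → ℝ) {S T : Type*} [DecidableEq S] [DecidableEq T]
    (X : Ω → S) (Y : Ω → T) : Prop :=
  ∀ s t, probOf μ (fun ω => (X ω, Y ω)) (s, t) = probOf μ X s * probOf μ Y t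

/-! Writing each entropy as an average over the sample space, `H(W) = -∑ μ ω * log P(W = W ω)`,
nonnegativity of `I(Y; Z | X)` is Gibbs' inequality: apply `log y ≤ y - 1` pointwise to
`y = P(X,Z) P(Y,Z) / (P(Z) P(X,Y,Z))`, whose `μ`-average is at most `1`. Then
`I(v̂; d) = I(v; v̂) - H(v | d) + I(v̂; d | v) + H(v | v̂, d)` with both correction terms nonnegative. -/

namespace probOf

variable {μ : Ω → ℝ} {S T : Type*} [DecidableEq S] [DecidableEq T]

theorem nonneg (hμ : ∀ ω, 0 ≤ μ ω) (X : Ω → S) (s : S) : 0 ≤ probOf μ X s :=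
  Finset.sum_nonneg fun ω _ => hμ ω

theorem le_apply (hμ : ∀ ω, 0 ≤ μ ω) (X : Ω → S) (ω : Ω) : μ ω ≤ probOf μ X (X ω) :=
  Finset.single_le_sum (fun ω _ => hμ ω) (by simp)

theorem le_comp (hμ : ∀ ω, 0 ≤ μ ω) (f : S → T) (X : Ω → S) (s : S) :
    probOf μ X s ≤ probOf μ (f ∘ X) (f s) :=
  Finset.sum_le_sum_of_subset_of_nonneg
    (Finset.monotone_filter_right _ fun _ _ => congrArg f) fun ω _ _ => hμ ω

theorem sum_mul [Fintype S] (X : Ω → S) (φ : S → ℝ) :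
    ∑ s, probOf μ X s * φ s = ∑ ω, μ ω * φ (X ω) := by
  rw [← Finset.sum_fiberwise Finset.univ X]
  refine Finset.sum_congr rfl fun s _ => ?_
  rw [probOf, Finset.sum_mul]
  exact Finset.sum_congr rfl fun ω hω => by rw [(Finset.mem_filter.1 hω).2]

theorem sum [Fintype S] (X : Ω → S) : ∑ s, probOf μ X s = ∑ ω, μ ω := by
  simpa using sum_mul (μ := μ) X 1

theorem sum_pair_left [Fintype S] (X : Ω → S) (Y : Ω → T) (t : T) :
    ∑ s, probOf μ (fun ω => (X ω, Y ω)) (s, t) = probOf μ Y t := by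
  rw [probOf, ← Finset.sum_fiberwise _ X]
  refine Finset.sum_congr rfl fun s _ => ?_
  rw [probOf, Finset.filter_filter]
  simp only [Prod.mk.injEq, and_comm]

theorem sum_mul_div_le [Fintype S] (hμ : ∀ ω, 0 ≤ μ ω) (X : Ω → S) {f : S → ℝ}
    (hf : ∀ s, 0 ≤ f s) : ∑ ω, μ ω * (f (X ω) / probOf μ X (X ω)) ≤ ∑ s, f s := by
  rw [← sum_mul X fun s => f s / probOf μ X s]
  refine Finset.sum_le_sum fun s _ => ?_
  rcases (nonneg hμ X s).eq_or_lt with h0 | hpos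
  · simp [← h0, hf s]
  · rw [mul_div_cancel₀ _ hpos.ne']

end probOf

section

variable {μ : Ω → ℝ} {S T U : Type*} [Fintype S] [DecidableEq S] [Fintype T] [DecidableEq T]
  [Fintype U] [DecidableEq U]

theorem sum_mul_le_sum_mul_of_pos (hμ : ∀ ω, 0 ≤ μ ω) {a b : Ω → ℝ}
    (h : ∀ ω, 0 < μ ω → a ω ≤ b ω) : ∑ ω, μ ω * a ω ≤ ∑ ω, μ ω * b ω := by
  refine Finset.sum_le_sum fun ω _ => ?_
  rcases (hμ ω).eq_or_lt with h0 | hpos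
  · simp [← h0]
  · exact mul_le_mul_of_nonneg_left (h ω hpos) hpos.le

theorem entropy_eq_neg_sum_mul_log (X : Ω → S) :
    entropy μ X = -∑ ω, μ ω * Real.log (probOf μ X (X ω)) := by
  rw [← probOf.sum_mul X fun s => Real.log (probOf μ X s), entropy, ← Finset.sum_neg_distrib]
  simp only [Real.negMulLog, neg_mul]

theorem entropy_comp_le (hμ : ∀ ω, 0 ≤ μ ω) (f : S → T) (X : Ω → S) :
    entropy μ (f ∘ X) ≤ entropy μ X := by
  rw [entropy_eq_neg_sum_mul_log, entropy_eq_neg_sum_mul_log, neg_le_neg_iff]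
  refine sum_mul_le_sum_mul_of_pos hμ fun ω hpos => Real.log_le_log ?_ (probOf.le_comp hμ f X _)
  exact hpos.trans_le (probOf.le_apply hμ X ω)

theorem entropy_pair_comm (hμ : ∀ ω, 0 ≤ μ ω) (X : Ω → S) (Y : Ω → T) :
    entropy μ (fun ω => (Y ω, X ω)) = entropy μ (fun ω => (X ω, Y ω)) :=
  le_antisymm (entropy_comp_le hμ Prod.swap fun ω => (X ω, Y ω))
    (entropy_comp_le hμ Prod.swap fun ω => (Y ω, X ω))

theorem sum_probOf_mul_probOf_div (X : Ω → S) (Y : Ω → T) (Z : Ω → U) :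
    ∑ i : S × T × U, probOf μ (fun ω => (X ω, Z ω)) (i.1, i.2.2)
      * probOf μ (fun ω => (Y ω, Z ω)) (i.2.1, i.2.2) / probOf μ Z i.2.2 = ∑ ω, μ ω := by
  have fiber (z : U) : ∑ x, ∑ y, probOf μ (fun ω => (X ω, Z ω)) (x, z)
      * probOf μ (fun ω => (Y ω, Z ω)) (y, z) / probOf μ Z z = probOf μ Z z := by
    simp_rw [← Finset.sum_div, ← Finset.sum_mul_sum, probOf.sum_pair_left, mul_self_div_self]
  rw [← probOf.sum Z, ← Finset.sum_congr rfl fun z _ => fiber z]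
  simp only [Fintype.sum_prod_type]
  exact (Finset.sum_congr rfl fun _ _ => Finset.sum_comm).trans Finset.sum_comm

theorem condMutualInfo_nonneg (hμ : ∀ ω, 0 ≤ μ ω) (X : Ω → S) (Y : Ω → T) (Z : Ω → U) :
    0 ≤ condMutualInfo μ X Y Z := by
  let pXZ ω := probOf μ (fun ω => (X ω, Z ω)) (X ω, Z ω)
  let pYZ ω := probOf μ (fun ω => (Y ω, Z ω)) (Y ω, Z ω)
  let pXYZ ω := probOf μ (fun ω => (X ω, Y ω, Z ω)) (X ω, Y ω, Z ω)
  let pZ ω := probOf μ Z (Z ω)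
  have gibbs : ∑ ω, μ ω * (Real.log (pXZ ω) + Real.log (pYZ ω) - Real.log (pZ ω)
      - Real.log (pXYZ ω)) ≤ ∑ ω, μ ω * (pXZ ω * pYZ ω / pZ ω / pXYZ ω - 1) := by
    refine sum_mul_le_sum_mul_of_pos hμ fun ω hpos => ?_
    have hXZ : 0 < pXZ ω := hpos.trans_le (probOf.le_apply hμ _ ω)
    have hYZ : 0 < pYZ ω := hpos.trans_le (probOf.le_apply hμ _ ω)
    have hXYZ : 0 < pXYZ ω := hpos.trans_le (probOf.le_apply hμ _ ω)
    have hZ : 0 < pZ ω := hpos.trans_le (probOf.le_apply hμ _ ω)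
    rw [← Real.log_mul hXZ.ne' hYZ.ne', ← Real.log_div (by positivity) hZ.ne',
      ← Real.log_div (by positivity) hXYZ.ne']
    exact Real.log_le_sub_one_of_pos (by positivity)
  have mass : ∑ ω, μ ω * (pXZ ω * pYZ ω / pZ ω / pXYZ ω) ≤ ∑ ω, μ ω :=
    (probOf.sum_mul_div_le hμ (fun ω => (X ω, Y ω, Z ω))
      (f := fun i => probOf μ (fun ω => (X ω, Z ω)) (i.1, i.2.2)
        * probOf μ (fun ω => (Y ω, Z ω)) (i.2.1, i.2.2) / probOf μ Z i.2.2)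
      fun _ => div_nonneg (mul_nonneg (probOf.nonneg hμ _ _) (probOf.nonneg hμ _ _))
        (probOf.nonneg hμ _ _)).trans_eq (sum_probOf_mul_probOf_div X Y Z)
  rw [condMutualInfo, entropy_eq_neg_sum_mul_log, entropy_eq_neg_sum_mul_log,
    entropy_eq_neg_sum_mul_log, entropy_eq_neg_sum_mul_log]
  simp only [mul_sub, mul_add, mul_one, Finset.sum_sub_distrib, Finset.sum_add_distrib] at gibbs
  simp only [pXZ, pYZ, pXYZ, pZ] at gibbs mass
  linarith

theorem mutualInfo_sub_condEntropy_le (hμ : ∀ ω, 0 ≤ μ ω) (X : Ω → S) (Y : Ω → T) (Z : Ω → U) :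
    mutualInfo μ X Y - condEntropy μ X Z ≤ mutualInfo μ Y Z := by
  have hcmi := condMutualInfo_nonneg hμ Y Z X
  have hYZ_le : entropy μ (fun ω => (Y ω, Z ω)) ≤ entropy μ (fun ω => (Y ω, Z ω, X ω)) :=
    entropy_comp_le hμ (fun i : T × U × S => (i.1, i.2.1)) fun ω => (Y ω, Z ω, X ω)
  rw [condMutualInfo, entropy_pair_comm hμ X Y, entropy_pair_comm hμ X Z] at hcmi
  rw [mutualInfo, mutualInfo, condEntropy]
  linarith

end

theorem leakage {V VH D : Type*} [Fintype V] [DecidableEq V] [Fintype VH] [DecidableEq VH] [Fintype D] [DecidableEq D] (μ : Ω → ℝ) (hμ : IsProbMass μ) (v : Ω → V) (vh : Ω → VH) (d : Ω → D)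
    (h : mutualInfo μ v vh > condEntropy μ v d) :
    mutualInfo μ vh d > 0 :=
  (sub_pos.2 h).trans_le (mutualInfo_sub_condEntropy_le hμ.1 v vh d)
end

section
/- For discrete random variables v, v̂, d: I(v; d) + I(v; v̂) ≤ H(v) + I(v̂; d). Equivalently, the sum of pairwise informations of v with d and with v̂ is bounded by the entropy of v plus the information shared between d and v̂. -/
/-! Expanding the mutual informations, the claim is `H(v) + H(v̂, d) ≤ H(v, v̂) + H(v, d)`. It is the
sum of monotonicity, `H(v̂, d) ≤ H(v, v̂, d)`, and submodularity,
`H(v) + H(v, v̂, d) ≤ H(v, v̂) + H(v, d)`. Fibrewise over the values of `v`, submodularity is the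
subadditivity `H(v̂, d) ≤ H(v̂) + H(d)`, i.e. Gibbs' inequality against the product of the marginals. -/

open Finset

variable {Ω : Type*} [Fintype Ω]

open Real

lemma Real.negMulLog_add_le {a b : ℝ} (ha : 0 ≤ a) (hb : 0 ≤ b) :
    negMulLog (a + b) ≤ negMulLog a + negMulLog b := by
  rcases ha.eq_or_lt with rfl | ha
  · simp
  rcases hb.eq_or_lt with rfl | hb
  · simp
  have hla : log a ≤ log (a + b) := log_le_log ha (by linarith)
  have hlb : log b ≤ log (a + b) := log_le_log hb (by linarith)
  simp only [negMulLog, neg_mul]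
  nlinarith [mul_le_mul_of_nonneg_left hla ha.le, mul_le_mul_of_nonneg_left hlb hb.le]

lemma Real.negMulLog_sum_le {ι : Type*} (s : Finset ι) {f : ι → ℝ} (hf : ∀ i ∈ s, 0 ≤ f i) :
    negMulLog (∑ i ∈ s, f i) ≤ ∑ i ∈ s, negMulLog (f i) := by
  induction s using Finset.cons_induction with
  | empty => simp
  | cons a s ha ih =>
    rw [sum_cons, sum_cons]
    have hs : ∀ i ∈ s, 0 ≤ f i := fun i hi => hf i (mem_cons_of_mem hi)
    exact (negMulLog_add_le (hf a (mem_cons_self a s)) (sum_nonneg hs)).trans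
      (add_le_add_right (ih hs) _)

lemma Real.mul_log_le_mul_log_add_sub {p q : ℝ} (hp : 0 ≤ p) (hq : 0 ≤ q) (hpq : 0 < p → 0 < q) :
    p * log q ≤ p * log p + (q - p) := by
  rcases hp.eq_or_lt with rfl | hp
  · simpa using hq
  have hq := hpq hp
  have key := mul_le_mul_of_nonneg_left (log_le_sub_one_of_pos (div_pos hq hp)) hp.le
  rw [log_div hq.ne' hp.ne', mul_sub_one, mul_div_cancel₀ q hp.ne'] at key
  linarith

lemma Real.sum_mul_log_le_sum_mul_log {ι : Type*} [Fintype ι] {p q : ι → ℝ}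
    (hp : ∀ i, 0 ≤ p i) (hq : ∀ i, 0 ≤ q i) (hpq : ∀ i, 0 < p i → 0 < q i)
    (hsum : ∑ i, q i ≤ ∑ i, p i) :
    ∑ i, p i * log (q i) ≤ ∑ i, p i * log (p i) :=
  calc ∑ i, p i * log (q i) ≤ ∑ i, (p i * log (p i) + (q i - p i)) :=
        sum_le_sum fun i _ => mul_log_le_mul_log_add_sub (hp i) (hq i) (hpq i)
    _ ≤ ∑ i, p i * log (p i) := by
        rw [sum_add_distrib, sum_sub_distrib]
        linarith

/-- `H(Y, Z) ≤ H(Y) + H(Z)` for an unnormalised joint mass `r`; the term `negMulLog` of the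
total mass accounts for the missing normalisation. -/
lemma Real.negMulLog_sum_sum_add_sum_sum_negMulLog_le {β γ : Type*} [Fintype β] [Fintype γ]
    {r : β → γ → ℝ} (hr : ∀ y z, 0 ≤ r y z) :
    negMulLog (∑ y, ∑ z, r y z) + ∑ y, ∑ z, negMulLog (r y z)
      ≤ ∑ y, negMulLog (∑ z, r y z) + ∑ z, negMulLog (∑ y, r y z) := by
  set R : β → ℝ := fun y => ∑ z, r y z
  set C : γ → ℝ := fun z => ∑ y, r y z
  set T : ℝ := ∑ y, ∑ z, r y z
  have hR : ∀ y z, r y z ≤ R y := fun y z => single_le_sum (fun z _ => hr y z) (mem_univ z)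
  have hC : ∀ y z, r y z ≤ C z :=
    fun y z => single_le_sum (f := (r · z)) (fun y _ => hr y z) (mem_univ y)
  have hT : ∀ y, R y ≤ T :=
    fun y => single_le_sum (f := R) (fun y _ => sum_nonneg fun z _ => hr y z) (mem_univ y)
  have hCT : ∑ z, C z = T := sum_comm
  have hprod : ∑ y, ∑ z, R y * C z / T = T :=
    calc ∑ y, ∑ z, R y * C z / T = (∑ y, R y) * (∑ z, C z) / T := by
          simp_rw [sum_mul_sum, sum_div]
      _ = T := by rw [hCT, mul_self_div_self]
  -- Gibbs against the product `R y * C z / T` of the marginals.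
  have gibbs : ∑ y, ∑ z, r y z * log (R y * C z / T) ≤ ∑ y, ∑ z, r y z * log (r y z) := by
    have := sum_mul_log_le_sum_mul_log (p := fun x : β × γ => r x.1 x.2)
      (q := fun x => R x.1 * C x.2 / T) (fun x => hr x.1 x.2)
      (fun x => div_nonneg (mul_nonneg ((hr _ _).trans (hR x.1 x.2))
        ((hr _ _).trans (hC x.1 x.2))) ((hr _ _).trans ((hR x.1 x.2).trans (hT x.1))))
      (fun x hx => div_pos (mul_pos (hx.trans_le (hR x.1 x.2)) (hx.trans_le (hC x.1 x.2)))
        (hx.trans_le ((hR x.1 x.2).trans (hT x.1))))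
      (by simpa only [Fintype.sum_prod_type] using hprod.le)
    simpa only [Fintype.sum_prod_type] using this
  have hlog : ∀ y z, r y z * log (R y * C z / T)
      = r y z * log (R y) + r y z * log (C z) - r y z * log T := by
    intro y z
    rcases (hr y z).eq_or_lt with h0 | hpos
    · simp [← h0]
    have hRy := hpos.trans_le (hR y z)
    rw [log_div (mul_pos hRy (hpos.trans_le (hC y z))).ne' (hRy.trans_le (hT y)).ne',
      log_mul hRy.ne' (hpos.trans_le (hC y z)).ne']
    ring
  have hsplit : ∑ y, ∑ z, r y z * log (R y * C z / T)
      = ∑ y, R y * log (R y) + ∑ z, C z * log (C z) - T * log T := by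
    simp_rw [hlog, sum_sub_distrib, sum_add_distrib, ← sum_mul]
    rw [sum_comm (f := fun y z => r y z * log (C z))]
    simp_rw [← sum_mul]
    rfl
  simp only [negMulLog, neg_mul, sum_neg_distrib]
  linarith

section Marginals

variable (μ : Ω → ℝ) {S T U : Type*} [DecidableEq S] [DecidableEq T] [DecidableEq U]

lemma probOf_congr {X : Ω → S} {Y : Ω → T} {s : S} {t : T} (h : ∀ ω, X ω = s ↔ Y ω = t) :
    probOf μ X s = probOf μ Y t := by
  unfold probOf
  rw [filter_congr fun ω _ => h ω]

lemma probOf_eq_sum_probOf_pair [Fintype T] (X : Ω → S) (Y : Ω → T) (s : S) :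
    probOf μ X s = ∑ t, probOf μ (fun ω => (X ω, Y ω)) (s, t) := by
  unfold probOf
  rw [← sum_fiberwise _ Y]
  simp only [filter_filter, Prod.mk.injEq]

lemma probOf_snd_eq_sum_probOf_pair [Fintype S] (X : Ω → S) (Y : Ω → T) (t : T) :
    probOf μ Y t = ∑ s, probOf μ (fun ω => (X ω, Y ω)) (s, t) := by
  rw [probOf_eq_sum_probOf_pair μ Y X]
  exact sum_congr rfl fun s _ => probOf_congr μ fun ω => by
    simp only [Prod.mk.injEq, and_comm]

lemma probOf_pair₁₂_eq_sum_probOf_triple [Fintype U] (X : Ω → S) (Y : Ω → T) (Z : Ω → U)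
    (s : S) (t : T) :
    probOf μ (fun ω => (X ω, Y ω)) (s, t)
      = ∑ u, probOf μ (fun ω => (X ω, Y ω, Z ω)) (s, t, u) := by
  rw [probOf_eq_sum_probOf_pair μ _ Z]
  exact sum_congr rfl fun u _ => probOf_congr μ fun ω => by
    simp only [Prod.mk.injEq, and_assoc]

lemma probOf_pair₁₃_eq_sum_probOf_triple [Fintype T] (X : Ω → S) (Y : Ω → T) (Z : Ω → U)
    (s : S) (u : U) :
    probOf μ (fun ω => (X ω, Z ω)) (s, u)
      = ∑ t, probOf μ (fun ω => (X ω, Y ω, Z ω)) (s, t, u) := by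
  rw [probOf_eq_sum_probOf_pair μ _ Y]
  exact sum_congr rfl fun t _ => probOf_congr μ fun ω => by
    simp only [Prod.mk.injEq]
    tauto

end Marginals

section Entropy

variable {μ : Ω → ℝ} {S T U : Type*} [Fintype S] [DecidableEq S]
  [Fintype T] [DecidableEq T] [Fintype U] [DecidableEq U]

lemma entropy_le_entropy_pair (hμ : ∀ ω, 0 ≤ μ ω) (X : Ω → S) (Y : Ω → T) :
    entropy μ Y ≤ entropy μ (fun ω => (X ω, Y ω)) :=
  calc entropy μ Y = ∑ t, negMulLog (∑ s, probOf μ (fun ω => (X ω, Y ω)) (s, t)) := by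
        simp_rw [entropy, probOf_snd_eq_sum_probOf_pair μ X Y]
    _ ≤ ∑ t, ∑ s, negMulLog (probOf μ (fun ω => (X ω, Y ω)) (s, t)) :=
        sum_le_sum fun t _ => negMulLog_sum_le _ fun s _ => sum_nonneg fun ω _ => hμ ω
    _ = entropy μ (fun ω => (X ω, Y ω)) := by rw [entropy, Fintype.sum_prod_type, sum_comm]

lemma entropy_add_entropy_triple_le (hμ : ∀ ω, 0 ≤ μ ω) (X : Ω → S) (Y : Ω → T) (Z : Ω → U) :
    entropy μ X + entropy μ (fun ω => (X ω, Y ω, Z ω))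
      ≤ entropy μ (fun ω => (X ω, Y ω)) + entropy μ (fun ω => (X ω, Z ω)) := by
  set q : S → T → U → ℝ := fun s t u => probOf μ (fun ω => (X ω, Y ω, Z ω)) (s, t, u)
  have hq : ∀ s t u, 0 ≤ q s t u := fun s t u => sum_nonneg fun ω _ => hμ ω
  have hX : entropy μ X = ∑ s, negMulLog (∑ t, ∑ u, q s t u) := by
    simp_rw [entropy, probOf_eq_sum_probOf_pair μ X (fun ω => (Y ω, Z ω)),
      Fintype.sum_prod_type]
    rfl
  have hXY : entropy μ (fun ω => (X ω, Y ω)) = ∑ s, ∑ t, negMulLog (∑ u, q s t u) := by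
    simp_rw [entropy, Fintype.sum_prod_type, probOf_pair₁₂_eq_sum_probOf_triple μ X Y Z]
    rfl
  have hXZ : entropy μ (fun ω => (X ω, Z ω)) = ∑ s, ∑ u, negMulLog (∑ t, q s t u) := by
    simp_rw [entropy, Fintype.sum_prod_type, probOf_pair₁₃_eq_sum_probOf_triple μ X Y Z]
    rfl
  have hXYZ : entropy μ (fun ω => (X ω, Y ω, Z ω)) = ∑ s, ∑ t, ∑ u, negMulLog (q s t u) := by
    simp only [entropy, Fintype.sum_prod_type]
    rfl
  rw [hX, hXY, hXZ, hXYZ, ← sum_add_distrib, ← sum_add_distrib]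
  exact sum_le_sum fun s _ => negMulLog_sum_sum_add_sum_sum_negMulLog_le (hq s)

end Entropy

theorem info_sum_le_entropy_add_leak {V VH D : Type*} [Fintype V] [DecidableEq V] [Fintype VH] [DecidableEq VH] [Fintype D] [DecidableEq D] (μ : Ω → ℝ) (hμ : IsProbMass μ) (v : Ω → V) (vh : Ω → VH) (d : Ω → D) :
    mutualInfo μ v d + mutualInfo μ v vh ≤ entropy μ v + mutualInfo μ vh d := by
  have hmono := entropy_le_entropy_pair hμ.1 v fun ω => (vh ω, d ω)
  have hsubmod := entropy_add_entropy_triple_le hμ.1 v vh d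
  unfold mutualInfo
  linarith
end
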